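/- arXiv:2602.04379 — 2 statements merged into one kernel-verified Lean document; each statement's English description precedes it below -/
import Mathlib

section
/- Let k be a positive integer and G a graph on n vertices with a k-matching that is not fractional k-extendable. Then there exists S ⊆ V(G) with |S| ≥ 2k such that G[S] contains a k-matching and the number of isolated vertices of G - S is at least |S| - 2k + 1; consequently n ≥ 2|S| - 2k + 1 and G is a spanning subgraph of K_s ∨ (K_{n-2s+2k-1} ∪ (s-2k+1)K_1) with s = |S|. -/
open Finset

/-- The graph `K_a ∨ (K_b ∪ (n-a-b) K_1)` on vertex set `Fin n`:
first `a` vertices form the joined clique, next `b` form the second clique,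
remaining vertices are the independent part. -/
def jud (n a b : ℕ) : SimpleGraph (Fin n) where
  Adj u v := u ≠ v ∧ ((u : ℕ) < a ∨ (v : ℕ) < a ∨ ((u : ℕ) < a + b ∧ (v : ℕ) < a + b))
  symm := ⟨by intro u v h; exact ⟨h.1.symm, by tauto⟩⟩
  loopless := ⟨by intro u h; exact h.1 rfl⟩

instance (n a b : ℕ) : DecidableRel (jud n a b).Adj := fun u v =>
  inferInstanceAs (Decidable (u ≠ v ∧ ((u : ℕ) < a ∨ (v : ℕ) < a ∨ ((u : ℕ) < a + b ∧ (v : ℕ) < a + b))))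

/-- A finite set of edges of `G` forming a matching (pairwise vertex-disjoint edges). -/
def IsMatching {V : Type*} (G : SimpleGraph V) (M : Finset (Sym2 V)) : Prop :=
  (↑M : Set (Sym2 V)) ⊆ G.edgeSet ∧
    ∀ e ∈ M, ∀ f ∈ M, e ≠ f → ∀ v : V, v ∈ e → v ∉ f

/-- A fractional perfect matching of `G`. -/
def IsFPM {V : Type*} [Fintype V] [DecidableEq V] (G : SimpleGraph V)
    (h : Sym2 V → ℝ) : Prop :=
  (∀ e, 0 ≤ h e ∧ h e ≤ 1) ∧ (∀ e, e ∉ G.edgeSet → h e = 0) ∧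
    ∀ v : V, ∑ e ∈ Finset.univ.filter (fun e : Sym2 V => v ∈ e), h e = 1

/-- `G` is fractional `k`-extendable: it has a `k`-matching and every `k`-matching
extends to a fractional perfect matching assigning weight 1 to its edges. -/
def FracExt {V : Type*} [Fintype V] [DecidableEq V] (k : ℕ) (G : SimpleGraph V) : Prop :=
  (∃ M, IsMatching G M ∧ M.card = k) ∧
    ∀ M, IsMatching G M → M.card = k →
      ∃ h, IsFPM G h ∧ ∀ e ∈ M, h e = 1

/-- The largest eigenvalue (spectral radius, for the symmetric matrices considered here). -/
noncomputable def specRadius {n : ℕ} (M : Matrix (Fin n) (Fin n) ℝ) : ℝ :=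
  sSup {t : ℝ | ∃ v : Fin n → ℝ, v ≠ 0 ∧ M.mulVec v = t • v}

/-- Signless Laplacian spectral radius. -/
noncomputable def qRad {n : ℕ} (G : SimpleGraph (Fin n)) : ℝ := by
  classical exact specRadius (Matrix.of fun u v =>
    (if u = v then (G.degree u : ℝ) else 0) + (if G.Adj u v then 1 else 0))

/-- Distance spectral radius. -/
noncomputable def muRad {n : ℕ} (G : SimpleGraph (Fin n)) : ℝ :=
  specRadius (Matrix.of fun u v => (G.dist u v : ℝ))

/-- Wiener index (sum of pairwise distances). -/
noncomputable def wiener {n : ℕ} (G : SimpleGraph (Fin n)) : ℝ :=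
  (∑ u : Fin n, ∑ v : Fin n, (G.dist u v : ℝ)) / 2

section aux
variable {V : Type*} [Fintype V] [DecidableEq V] (G : SimpleGraph V) [DecidableRel G.Adj]

def mVerts (M : Finset (Sym2 V)) : Finset V :=
  Finset.univ.filter (fun v => ∃ e ∈ M, v ∈ e)

omit [Fintype V] in
lemma mem_mVerts {M : Finset (Sym2 V)} {v : V} [Fintype V] :
    v ∈ mVerts M ↔ ∃ e ∈ M, v ∈ e := by simp [mVerts]

omit [DecidableRel G.Adj] in
lemma card_mVerts {M : Finset (Sym2 V)} (hM : IsMatching G M) :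
    (mVerts M).card = 2 * M.card := by
  classical
  have : mVerts M = M.biUnion (fun e => Finset.univ.filter (· ∈ e)) := by
    ext v; simp [mVerts]
  rw [this, Finset.card_biUnion]
  · rw [Finset.sum_congr rfl (fun e he => ?_), Finset.sum_const, smul_eq_mul, mul_comm]
    · have hedge : e ∈ G.edgeSet := hM.1 he
      induction e with
      | h a b =>
        have hab : a ≠ b := ((G.mem_edgeSet).mp hedge).ne
        have : Finset.univ.filter (· ∈ s(a,b)) = {a, b} := by
          ext v; simp [Sym2.mem_iff]
        rw [this, Finset.card_insert_of_notMem (by simp [hab]), Finset.card_singleton]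
  · intro e he f hf hef
    simp only [Finset.disjoint_left, Finset.mem_filter]
    rintro v ⟨-, hv⟩ ⟨-, hv'⟩
    exact hM.2 e he f hf hef v hv hv'

variable (M : Finset (Sym2 V)) (f : {v : V // v ∉ mVerts M} → V)

def fext : V → V := fun v => if h : v ∈ mVerts M then v else f ⟨v, h⟩

noncomputable def gfun : V → V → ℝ := fun u v =>
  if G.Adj u v ∧ u ∉ mVerts M ∧ v ∉ mVerts M then
    ((if fext M f u = v then (1:ℝ) else 0) + (if fext M f v = u then 1 else 0))/2 else 0

lemma gfun_symm : ∀ u v, gfun G M f u v = gfun G M f v u := by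
  intro u v
  simp only [gfun]
  by_cases h1 : G.Adj u v
  · have h2 : G.Adj v u := h1.symm
    simp only [h1, h2, true_and]
    by_cases h3 : u ∉ mVerts M <;> by_cases h4 : v ∉ mVerts M <;> simp [h3, h4, add_comm]
  · have h2 : ¬ G.Adj v u := fun h => h1 h.symm
    simp [h1, h2]

noncomputable def hfun : Sym2 V → ℝ := fun e =>
  (if e ∈ M then 1 else 0) + Sym2.lift ⟨gfun G M f, gfun_symm G M f⟩ e

lemma exists_extension (hM : IsMatching G M)
    (hinj : Function.Injective f)
    (hf : ∀ w, G.Adj w.1 (f w) ∧ f w ∉ mVerts M) :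
    ∃ h, IsFPM G h ∧ ∀ e ∈ M, h e = 1 := by
  classical
  have hfext_adj : ∀ v (hv : v ∉ mVerts M),
      G.Adj v (fext M f v) ∧ fext M f v ∉ mVerts M := by
    intro v hv
    simp only [fext, dif_neg hv]
    exact hf ⟨v, hv⟩
  have hbij : Function.Bijective
      (fun w : {v : V // v ∉ mVerts M} => (⟨f w, (hf w).2⟩ : {v : V // v ∉ mVerts M})) := by
    apply Finite.injective_iff_bijective.mp
    intro a b hab
    exact hinj (by simpa using hab)
  have hmemT : ∀ e ∈ M, ∀ v ∈ e, v ∈ mVerts M := by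
    intro e he v hv
    exact mem_mVerts.mpr ⟨e, he, hv⟩
  have hMone : ∀ e ∈ M, hfun G M f e = 1 := by
    intro e he
    induction e with
    | h a b =>
      have ha : a ∈ mVerts M := hmemT _ he a (by simp)
      simp only [hfun, if_pos he, Sym2.lift_mk, gfun, ha]
      norm_num
  refine ⟨hfun G M f, ⟨?_, ?_, ?_⟩, hMone⟩
  · intro e
    induction e with
    | h a b =>
      by_cases he : s(a,b) ∈ M
      · rw [hMone _ he]; norm_num
      · simp only [hfun, if_neg he, Sym2.lift_mk, gfun, zero_add]
        constructor <;> split_ifs <;> norm_num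
  · intro e hedge
    induction e with
    | h a b =>
      have hne : s(a,b) ∉ M := fun hmem => hedge (hM.1 hmem)
      have hna : ¬ G.Adj a b := fun had => hedge ((G.mem_edgeSet).mpr had)
      simp [hfun, hne, gfun, hna]
  · intro v
    have himg : Finset.univ.filter (fun e : Sym2 V => v ∈ e)
        = Finset.univ.image (fun u => s(v, u)) := by
      ext e
      simp only [Finset.mem_filter, Finset.mem_univ, true_and, Finset.mem_image]
      constructor
      · intro hv
        exact ⟨Sym2.Mem.other hv, (Sym2.other_spec hv)⟩
      · rintro ⟨u, -, rfl⟩; simp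
    rw [himg, Finset.sum_image (by
      intro x _ y _ hxy
      simpa using (Sym2.congr_right.mp hxy))]
    have hsplit : ∀ u, hfun G M f s(v, u) =
        (if s(v,u) ∈ M then (1:ℝ) else 0) + gfun G M f v u := by
      intro u; simp [hfun]
    simp only [hsplit]
    rw [Finset.sum_add_distrib]
    by_cases hv : v ∈ mVerts M
    · obtain ⟨e₀, he₀, hve₀⟩ := mem_mVerts.mp hv
      have hew : s(v, Sym2.Mem.other hve₀) = e₀ := Sym2.other_spec hve₀
      have h1 : ∀ u : V, (if s(v,u) ∈ M then (1:ℝ) else 0)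
          = if u = Sym2.Mem.other hve₀ then 1 else 0 := by
        intro u
        by_cases hu : s(v,u) ∈ M
        · have heq : s(v,u) = e₀ := by
            by_contra hne
            exact hM.2 _ hu _ he₀ hne v (by simp) hve₀
          rw [← hew] at heq
          have : u = Sym2.Mem.other hve₀ := Sym2.congr_right.mp heq
          rw [if_pos hu, if_pos this]
        · have : u ≠ Sym2.Mem.other hve₀ := by
            rintro rfl
            rw [hew] at hu; exact hu he₀
          rw [if_neg hu, if_neg this]
      have h2 : ∀ u : V, gfun G M f v u = 0 := by
        intro u; simp [gfun, hv]
      simp only [h1, h2]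
      rw [Finset.sum_const_zero, Finset.sum_ite_eq' Finset.univ _ (fun _ => (1:ℝ))]
      simp
    · have h1 : ∀ u : V, (if s(v,u) ∈ M then (1:ℝ) else 0) = 0 := by
        intro u
        rw [if_neg]
        intro hmem
        exact hv (hmemT _ hmem v (by simp))
      obtain ⟨w₀, hw₀⟩ := hbij.2 ⟨v, hv⟩
      have hw₀v : f w₀ = v := by simpa using congrArg Subtype.val hw₀
      have hfextw₀ : fext M f w₀.1 = v := by
        simp only [fext, dif_neg w₀.2]
        exact hw₀v
      have hfv := hfext_adj v hv
      have h2 : ∀ u : V, gfun G M f v u =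
          ((if u = fext M f v then (1:ℝ) else 0) + (if u = w₀.1 then 1 else 0))/2 := by
        intro u
        simp only [gfun]
        have e1 : (fext M f v = u) = (u = fext M f v) := by
          simp [eq_comm]
        have e2 : (fext M f u = v) = (u = w₀.1) := by
          apply propext
          constructor
          · intro hx
            by_cases hu : u ∈ mVerts M
            · exfalso
              rw [fext, dif_pos hu] at hx
              exact hv (hx ▸ hu)
            · have : f ⟨u, hu⟩ = v := by rw [fext, dif_neg hu] at hx; exact hx
              have := hinj (a₁ := ⟨u, hu⟩) (a₂ := w₀) (by rw [this, hw₀v])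
              exact congrArg Subtype.val this
          · rintro rfl
            exact hfextw₀
        by_cases hcond : G.Adj v u ∧ v ∉ mVerts M ∧ u ∉ mVerts M
        · rw [if_pos hcond]
          simp only [e1, e2]
        · rw [if_neg hcond]
          have hu1 : ¬ (u = fext M f v) := by
            rintro rfl
            exact hcond ⟨hfv.1, hv, hfv.2⟩
          have hu2 : ¬ (u = w₀.1) := by
            rintro rfl
            exact hcond ⟨(hw₀v ▸ (hf w₀).1).symm, hv, w₀.2⟩
          simp [hu1, hu2]
      simp only [h1, h2]
      rw [Finset.sum_const_zero, zero_add, ← Finset.sum_div, Finset.sum_add_distrib,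
        Finset.sum_ite_eq' Finset.univ _ (fun _ => (1:ℝ)),
        Finset.sum_ite_eq' Finset.univ _ (fun _ => (1:ℝ))]
      norm_num

end aux

theorem stmt5 (k n : ℕ) (hk : 1 ≤ k) (V : Type*) [Fintype V] [DecidableEq V]
    (G : SimpleGraph V) [DecidableRel G.Adj] (hcard : Fintype.card V = n)
    (hM : ∃ M, IsMatching G M ∧ M.card = k) (hne : ¬ FracExt k G) :
    ∃ S : Finset V,
      (∃ M, IsMatching G M ∧ M.card = k ∧ ∀ e ∈ M, ∀ v ∈ e, v ∈ S) ∧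
      2 * k ≤ S.card ∧
      S.card - 2 * k + 1 ≤
        (Finset.univ.filter (fun v : V => v ∉ S ∧ ∀ u, G.Adj v u → u ∈ S)).card ∧
      2 * S.card - 2 * k + 1 ≤ n ∧
      ∃ e : V ≃ Fin n, ∀ u v : V, G.Adj u v →
        (jud n S.card (n - (2 * S.card - 2 * k) - 1)).Adj (e u) (e v) := by
  classical
  -- extract a bad matching
  have hbad : ∃ M, IsMatching G M ∧ M.card = k ∧
      ¬ ∃ h, IsFPM G h ∧ ∀ e ∈ M, h e = 1 := by
    by_contra hcon
    push_neg at hcon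
    exact hne ⟨hM, fun M hm hc => hcon M hm hc⟩
  obtain ⟨M0, hM0, hM0card, hnoext⟩ := hbad
  -- Hall fails for the graph outside the matching
  have hhall : ¬ ∀ A : Finset {v : V // v ∉ mVerts M0},
      A.card ≤ (A.biUnion
        (fun w => (G.neighborFinset w.1).filter (· ∉ mVerts M0))).card := by
    intro hall
    obtain ⟨f, hinj, hfmem⟩ :=
      (Finset.all_card_le_biUnion_card_iff_exists_injective _).mp hall
    refine hnoext (exists_extension G M0 f hM0 hinj ?_)
    intro w
    have h := hfmem w
    simp only [Finset.mem_filter, SimpleGraph.mem_neighborFinset] at h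
    exact ⟨h.1, h.2⟩
  push_neg at hhall
  obtain ⟨A, hAcard⟩ := hhall
  set A' : Finset V := A.image Subtype.val with hA'def
  set B : Finset V :=
    A.biUnion (fun w => (G.neighborFinset w.1).filter (· ∉ mVerts M0)) with hBdef
  have hA'card : A'.card = A.card := Finset.card_image_of_injective _ Subtype.val_injective
  have hA'sub : ∀ v ∈ A', v ∉ mVerts M0 := by
    intro v hv
    rw [hA'def, Finset.mem_image] at hv
    obtain ⟨w, -, rfl⟩ := hv
    exact w.2
  have hmemB : ∀ w, w ∈ B ↔ w ∉ mVerts M0 ∧ ∃ a ∈ A', G.Adj a w := by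
    intro w
    rw [hBdef]
    simp only [Finset.mem_biUnion, Finset.mem_filter, SimpleGraph.mem_neighborFinset,
      hA'def, Finset.mem_image]
    constructor
    · rintro ⟨a, ha, hadj, hw⟩
      exact ⟨hw, a.1, ⟨a, ha, rfl⟩, hadj⟩
    · rintro ⟨hw, x, ⟨a, ha, rfl⟩, hadj⟩
      exact ⟨a, ha, hadj, hw⟩
  have hABcard : B.card < A'.card := by rw [hA'card]; exact hAcard
  set I : Finset V := A' \ B with hIdef
  set NI : Finset V := B.filter (fun w => ∃ u ∈ I, G.Adj u w) with hNIdef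
  set S : Finset V := mVerts M0 ∪ NI with hSdef
  have hNIB : NI ⊆ B := by rw [hNIdef]; exact Finset.filter_subset _ _
  have hBT : ∀ w ∈ B, w ∉ mVerts M0 := fun w hw => ((hmemB w).mp hw).1
  have hScard : S.card = 2 * k + NI.card := by
    rw [hSdef, Finset.card_union_of_disjoint, card_mVerts G hM0, hM0card]
    rw [Finset.disjoint_left]
    intro a haT haNI
    exact hBT a (hNIB haNI) haT
  -- members of I are isolated in G - S
  have hI_iso : ∀ v ∈ I, v ∉ S ∧ ∀ u, G.Adj v u → u ∈ S := by
    intro v hv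
    rw [hIdef, Finset.mem_sdiff] at hv
    obtain ⟨hvA', hvB⟩ := hv
    have hvT : v ∉ mVerts M0 := hA'sub v hvA'
    constructor
    · rw [hSdef, Finset.mem_union]
      rintro (h | h)
      · exact hvT h
      · exact hvB (hNIB h)
    · intro u hadj
      rw [hSdef, Finset.mem_union]
      by_cases huT : u ∈ mVerts M0
      · exact Or.inl huT
      · refine Or.inr ?_
        rw [hNIdef, Finset.mem_filter]
        have huB : u ∈ B := (hmemB u).mpr ⟨huT, v, hvA', hadj⟩
        exact ⟨huB, v, by rw [hIdef, Finset.mem_sdiff]; exact ⟨hvA', hvB⟩, hadj⟩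
  -- counting
  have hcount : NI.card + (A' ∩ B).card ≤ B.card := by
    have hsub : NI ∪ (A' ∩ B) ⊆ B :=
      Finset.union_subset hNIB Finset.inter_subset_right
    have hdisj : Disjoint NI (A' ∩ B) := by
      rw [Finset.disjoint_left]
      intro w hwNI hwAB
      rw [hNIdef, Finset.mem_filter] at hwNI
      obtain ⟨-, u, huI, hadj⟩ := hwNI
      have huT : u ∉ mVerts M0 := hA'sub u (Finset.mem_sdiff.mp (hIdef ▸ huI)).1
      have huB : u ∈ B := (hmemB u).mpr
        ⟨huT, w, (Finset.mem_inter.mp hwAB).1, hadj.symm⟩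
      exact (Finset.mem_sdiff.mp (hIdef ▸ huI)).2 huB
    calc NI.card + (A' ∩ B).card = (NI ∪ (A' ∩ B)).card :=
          (Finset.card_union_of_disjoint hdisj).symm
      _ ≤ B.card := Finset.card_le_card hsub
  have hIcard : I.card + (A' ∩ B).card = A'.card := by
    rw [hIdef]; exact Finset.card_sdiff_add_card_inter _ _
  have hNI_I : NI.card + 1 ≤ I.card := by omega
  -- isolated vertices
  set Iso : Finset V :=
    Finset.univ.filter (fun v : V => v ∉ S ∧ ∀ u, G.Adj v u → u ∈ S) with hIsodef
  have hIIso : I ⊆ Iso := by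
    intro v hv
    rw [hIsodef, Finset.mem_filter]
    exact ⟨Finset.mem_univ v, hI_iso v hv⟩
  have hIsocard : S.card - 2 * k + 1 ≤ Iso.card := by
    have := Finset.card_le_card hIIso
    omega
  have hSIso : Disjoint S Iso := by
    rw [Finset.disjoint_right]
    intro v hv
    exact (Finset.mem_filter.mp (hIsodef ▸ hv)).2.1
  have hSIson : S.card + Iso.card ≤ n := by
    rw [← Finset.card_union_of_disjoint hSIso, ← hcard]
    exact Finset.card_le_univ _
  have hSn : 2 * S.card - 2 * k + 1 ≤ n := by omega
  have hkS : 2 * k ≤ S.card := by omega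
  refine ⟨S, ⟨M0, hM0, hM0card, ?_⟩, hkS, hIsocard, hSn, ?_⟩
  · intro e he v hv
    rw [hSdef]
    exact Finset.mem_union_left _ (mem_mVerts.mpr ⟨e, he, hv⟩)
  -- the equivalence
  · obtain ⟨J, hJsub, hJcard⟩ := Finset.exists_subset_card_eq
      (show S.card - 2 * k + 1 ≤ Iso.card from hIsocard)
    have hJS : ∀ v ∈ J, v ∉ S := fun v hv =>
      (Finset.mem_filter.mp (hIsodef ▸ hJsub hv)).2.1
    have hJiso : ∀ v ∈ J, ∀ u, G.Adj v u → u ∈ S := fun v hv =>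
      (Finset.mem_filter.mp (hIsodef ▸ hJsub hv)).2.2
    set jj := S.card - 2 * k + 1 with hjjdef
    have c1 : Fintype.card {v : V // v ∈ S} = S.card :=
      Fintype.card_of_subtype S (fun _ => Iff.rfl)
    have c2 : Fintype.card {v : V // v ∉ S} = n - S.card := by
      rw [Fintype.card_subtype_compl, hcard, c1]
    have eJ : {w : {v : V // v ∉ S} // w.1 ∈ J} ≃ {v : V // v ∈ J} :=
      { toFun := fun w => ⟨w.1.1, w.2⟩
        invFun := fun v => ⟨⟨v.1, hJS v.1 v.2⟩, v.2⟩
        left_inv := fun w => rfl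
        right_inv := fun v => rfl }
    have cJ : Fintype.card {w : {v : V // v ∉ S} // w.1 ∈ J} = jj := by
      rw [Fintype.card_congr eJ, Fintype.card_of_subtype J (fun _ => Iff.rfl), hJcard]
    have cMid : Fintype.card {w : {v : V // v ∉ S} // ¬ (w.1 ∈ J)} = n - S.card - jj := by
      rw [Fintype.card_subtype_compl, c2, cJ]
    have hSJn : S.card + jj ≤ n := by omega
    have hn : S.card + ((n - S.card - jj) + jj) = n := by omega
    set eS := Fintype.equivFinOfCardEq c1 with heS
    set eMid := Fintype.equivFinOfCardEq cMid with heMid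
    set eJt := Fintype.equivFinOfCardEq cJ with heJt
    set ee : V ≃ Fin n :=
      ((Equiv.sumCompl (fun v : V => v ∈ S)).symm.trans
        ((Equiv.sumCongr eS (((Equiv.sumCompl
            (fun w : {v : V // v ∉ S} => w.1 ∈ J)).symm.trans
            (Equiv.sumComm _ _)).trans (Equiv.sumCongr eMid eJt))).trans
          (((Equiv.sumCongr (Equiv.refl (Fin S.card)) finSumFinEquiv).trans
            finSumFinEquiv).trans (finCongr hn)))) with heedef
    have hpos1 : ∀ (v : V) (hv : v ∈ S), (ee v : ℕ) < S.card := by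
      intro v hv
      have h1 : (Equiv.sumCompl (fun v : V => v ∈ S)).symm v = Sum.inl ⟨v, hv⟩ :=
        Equiv.sumCompl_symm_apply_of_pos hv
      simp only [heedef, Equiv.trans_apply, h1, Equiv.sumCongr_apply, Sum.map_inl,
        finSumFinEquiv_apply_left, Equiv.refl_apply, finCongr_apply, Fin.coe_cast,
        Fin.coe_castAdd]
      exact (eS ⟨v, hv⟩).is_lt
    have hpos2 : ∀ (v : V) (hv : v ∉ S), v ∉ J →
        (ee v : ℕ) < S.card + (n - S.card - jj) := by
      intro v hv hvJ
      have h1 : (Equiv.sumCompl (fun v : V => v ∈ S)).symm v = Sum.inr ⟨v, hv⟩ :=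
        Equiv.sumCompl_symm_apply_of_neg hv
      have hj : ¬ ((⟨v, hv⟩ : {v : V // v ∉ S}).1 ∈ J) := hvJ
      have h2 : (Equiv.sumCompl (fun w : {v : V // v ∉ S} => w.1 ∈ J)).symm ⟨v, hv⟩
          = Sum.inr ⟨⟨v, hv⟩, hj⟩ :=
        Equiv.sumCompl_symm_apply_of_neg (p := fun w : {v : V // v ∉ S} => w.1 ∈ J) hj
      simp only [heedef, Equiv.trans_apply, h1, h2, Equiv.sumCongr_apply, Sum.map_inr,
        Sum.map_inl, Equiv.sumComm_apply, Sum.swap_inr, finSumFinEquiv_apply_left,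
        finSumFinEquiv_apply_right, Equiv.refl_apply, finCongr_apply, Fin.coe_cast,
        Fin.coe_castAdd, Fin.coe_natAdd]
      have := (eMid ⟨⟨v, hv⟩, hj⟩).is_lt
      omega
    refine ⟨ee, ?_⟩
    intro u v huv
    refine ⟨fun hEq => (G.ne_of_adj huv) (ee.injective hEq), ?_⟩
    by_cases hu : u ∈ S
    · exact Or.inl (hpos1 u hu)
    · by_cases hv : v ∈ S
      · exact Or.inr (Or.inl (hpos1 v hv))
      · refine Or.inr (Or.inr ?_)
        have huJ : u ∉ J := fun h => hv (hJiso u h v huv)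
        have hvJ : v ∉ J := fun h => hu (hJiso v h u huv.symm)
        have b1 := hpos2 u hu huJ
        have b2 := hpos2 v hv hvJ
        have hb : S.card + (n - S.card - jj) =
            S.card + (n - (2 * S.card - 2 * k) - 1) := by omega
        rw [hb] at b1 b2
        exact ⟨b1, b2⟩
end

section
/- Let k, s, n be integers with k ≥ 1, s ≥ 2k+1, n ≥ max{2s-2k+2, 2k+5}, and let g(x) = x² + (n - 4s - 4)x - 2n² - 12 + 10n - 10s + 4ns + 4ks - 2s². Then g(x) > 0 for every real x > 2n - 4. -/
open Finset

theorem stmt7 (k s n : ℤ) (hk : 1 ≤ k) (hs : 2 * k + 1 ≤ s)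
    (hn1 : 2 * s - 2 * k + 2 ≤ n) (hn2 : 2 * k + 5 ≤ n)
    (x : ℝ) (hx : 2 * (n : ℝ) - 4 < x) :
    0 < x ^ 2 + ((n : ℝ) - 4 * s - 4) * x - 2 * (n : ℝ) ^ 2 - 12 + 10 * n - 10 * s
        + 4 * n * s + 4 * k * s - 2 * (s : ℝ) ^ 2 := by
  have hk' : (1:ℝ) ≤ k := by exact_mod_cast hk
  have hs' : 2 * (k:ℝ) + 1 ≤ s := by exact_mod_cast hs
  have hn1' : 2 * (s:ℝ) - 2 * k + 2 ≤ n := by exact_mod_cast hn1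
  have hn2' : 2 * (k:ℝ) + 5 ≤ n := by exact_mod_cast hn2
  have hd : (0:ℝ) < x - (2 * n - 4) := by linarith
  have hslope : (0:ℝ) ≤ 5 * n - 4 * s - 12 := by linarith
  have hq : (0:ℝ) ≤ 4 * (n:ℝ)^2 - (18 + 4*s) * n + 20 + 6*s + 4*k*s - 2*s^2 := by
    rcases le_or_gt (2*k+2) s with h | h
    · have h' : 2 * (k:ℝ) + 2 ≤ s := by exact_mod_cast h
      nlinarith [mul_nonneg (by linarith : (0:ℝ) ≤ n - (2*s-2*k+2)) (by linarith : (0:ℝ) ≤ 4*n + 4*(2*s-2*k+2) - (18+4*s)), mul_nonneg (by linarith : (0:ℝ) ≤ (s:ℝ) - (2*k+2)) (by linarith : (0:ℝ) ≤ 12*(s:ℝ) - 20*k - 6), sq_nonneg ((s:ℝ) - (2*k+2))]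
    · have hse : s = 2*k+1 := le_antisymm (by linarith) hs
      have hse' : (s:ℝ) = 2*k+1 := by exact_mod_cast hse
      nlinarith [mul_nonneg (by linarith : (0:ℝ) ≤ n - (2*k+5)) (by linarith : (0:ℝ) ≤ 4*n + 4*(2*(k:ℝ)+5) - (18+4*s)), sq_nonneg ((k:ℝ)-1), hse']
  nlinarith [sq_nonneg (x - (2*n-4)), mul_nonneg hd.le hslope, hq]
end
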